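/- (Stability inequality) Let n, m ≥ 1 and let u = (u_1,…,u_m) be a stable solution of system (S) on ℝⁿ such that ∂_j H_i(u(x)) ∂_i H_j(u(x)) > 0 for all i, j and all x ∈ ℝⁿ. Then for all compactly supported C¹ functions ζ_1,…,ζ_m : ℝⁿ → ℝ: ∑_{i,j=1}^m ∫_{ℝⁿ} √(∂_j H_i(u) ∂_i H_j(u)) ζ_i ζ_j dx ≤ ∑_{i=1}^m ∫_{ℝⁿ} ⟨A(∇u_i)∇ζ_i, ∇ζ_i⟩ dx. -/

import Mathlib

open MeasureTheory Metric Finset Filter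
open scoped RealInnerProductSpace

noncomputable section

/-- Divergence of a vector field on Euclidean space. -/
def vdiv {n : ℕ} (F : EuclideanSpace ℝ (Fin n) → EuclideanSpace ℝ (Fin n))
    (x : EuclideanSpace ℝ (Fin n)) : ℝ :=
  ∑ i, fderiv ℝ F x (EuclideanSpace.single i 1) i

/-- The linearized coefficient matrix `A(η) = 2Φ''(|η|²) η ηᵀ + Φ'(|η|²) Id`,
acting on a vector `v`. -/
def Amul {n : ℕ} (Φ : ℝ → ℝ) (η v : EuclideanSpace ℝ (Fin n)) :
    EuclideanSpace ℝ (Fin n) :=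
  (2 * deriv (deriv Φ) (‖η‖ ^ 2) * ⟪η, v⟫) • η + deriv Φ (‖η‖ ^ 2) • v

lemma coord_le_norm {k : ℕ} (x : EuclideanSpace ℝ (Fin k)) (i : Fin k) : |x i| ≤ ‖x‖ := by
  have := abs_real_inner_le_norm x (EuclideanSpace.single i 1)
  simpa [EuclideanSpace.inner_single_right, EuclideanSpace.norm_single] using this

lemma integral_vdiv_eq_zero {k : ℕ}
    (G : EuclideanSpace ℝ (Fin (k+1)) → EuclideanSpace ℝ (Fin (k+1)))
    (hGc : Continuous G) (hGd : ∀ x, DifferentiableAt ℝ G x)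
    (hGs : HasCompactSupport G) (hdc : Continuous (vdiv G)) :
    ∫ x, vdiv G x = 0 := by
  obtain ⟨R, hR⟩ := hGs.isBounded.subset_closedBall 0
  set R' : ℝ := max R 0 + 1 with hR'
  have hRR' : R < R' := lt_of_le_of_lt (le_max_left _ _) (lt_add_one _)
  -- outside the closed ball of radius `max R 0`, G = 0
  have hG0 : ∀ z : EuclideanSpace ℝ (Fin (k+1)), R' ≤ ‖z‖ → G z = 0 := by
    intro z hz
    apply image_eq_zero_of_notMem_tsupport
    intro hzt
    have := hR hzt
    simp only [mem_closedBall, dist_zero_right] at this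
    linarith
  have hdiv0 : ∀ z : EuclideanSpace ℝ (Fin (k+1)), R' ≤ ‖z‖ → vdiv G z = 0 := by
    intro z hz
    have hfd : fderiv ℝ G z = 0 := by
      apply image_eq_zero_of_notMem_tsupport
      intro hzt
      have := hR (tsupport_fderiv_subset ℝ hzt)
      simp only [mem_closedBall, dist_zero_right] at this
      linarith
    simp [vdiv, hfd]
  -- transfer to Pi space
  set eL : EuclideanSpace ℝ (Fin (k+1)) ≃L[ℝ] (Fin (k+1) → ℝ) :=
    PiLp.continuousLinearEquiv 2 ℝ _ with heL
  have hEQ : ∫ x, vdiv G x = ∫ y : Fin (k+1) → ℝ, vdiv G (eL.symm y) :=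
    (((EuclideanSpace.volume_preserving_symm_measurableEquiv_toLp (Fin (k+1))).symm
        (MeasurableEquiv.toLp 2 (Fin (k+1) → ℝ)).symm).integral_comp
      (MeasurableEquiv.toLp 2 (Fin (k+1) → ℝ)).measurableEmbedding _).symm
  set a : Fin (k+1) → ℝ := fun _ => -R'
  set b : Fin (k+1) → ℝ := fun _ => R'
  have hab : a ≤ b := by
    intro i
    have h0 : (0:ℝ) ≤ R' := by simp only [hR']; positivity
    simp only [a, b]; linarith
  -- outside Icc a b the function vanishes
  have hout : ∀ y : Fin (k+1) → ℝ, y ∉ Set.Icc a b → R' ≤ ‖eL.symm y‖ := by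
    intro y hy
    rw [Set.mem_Icc] at hy
    have : ¬ (a ≤ y ∧ y ≤ b) := hy
    rcases not_and_or.mp this with h | h <;>
    · rw [Pi.le_def, not_forall] at h
      obtain ⟨i, hi⟩ := h
      refine le_trans ?_ (coord_le_norm (eL.symm y) i)
      have : (eL.symm y) i = y i := rfl
      rw [this]
      simp only [a, b] at hi
      rcases le_or_gt R' |y i| with h | h
      · exact h
      · rw [abs_lt] at h; exfalso; exact hi (by linarith)
  -- restrict integral to the box
  have hEQ2 : ∫ y : Fin (k+1) → ℝ, vdiv G (eL.symm y)
      = ∫ y in Set.Icc a b, vdiv G (eL.symm y) := by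
    refine (setIntegral_eq_integral_of_forall_compl_eq_zero ?_).symm
    intro y hy
    exact hdiv0 _ (hout y hy)
  -- set up the divergence theorem
  set f : (Fin (k+1) → ℝ) → (Fin (k+1) → ℝ) := fun y => eL (G (eL.symm y)) with hf
  set f' : (Fin (k+1) → ℝ) → (Fin (k+1) → ℝ) →L[ℝ] (Fin (k+1) → ℝ) :=
    fun y => (eL : EuclideanSpace ℝ (Fin (k+1)) →L[ℝ] (Fin (k+1) → ℝ)).comp
      ((fderiv ℝ G (eL.symm y)).comp
        (eL.symm : (Fin (k+1) → ℝ) →L[ℝ] EuclideanSpace ℝ (Fin (k+1)))) with hf'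
  have hfd : ∀ y, HasFDerivAt f (f' y) y := by
    intro y
    exact (eL.toContinuousLinearMap.hasFDerivAt.comp _
      (((hGd (eL.symm y)).hasFDerivAt).comp _ eL.symm.toContinuousLinearMap.hasFDerivAt))
  have hdivf : ∀ y, (∑ i, f' y (Pi.single i 1) i) = vdiv G (eL.symm y) := by
    intro y
    rfl
  have hDT := MeasureTheory.integral_divergence_of_hasFDerivAt_off_countable a b hab
    f f' ∅ Set.countable_empty
    (by
      apply Continuous.continuousOn
      exact eL.continuous.comp (hGc.comp eL.symm.continuous))
    (fun x _ => hfd x)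
    (by
      apply Continuous.integrableOn_Icc
      have : (fun x => ∑ i, f' x (Pi.single i 1) i) = fun x => vdiv G (eL.symm x) := by
        funext y; exact hdivf y
      rw [this]
      exact hdc.comp eL.symm.continuous)
  -- boundary terms vanish
  have hface : ∀ (i : Fin (k+1)) (c : ℝ), |c| = R' →
      ∀ x : Fin k → ℝ, f (i.insertNth c x) i = 0 := by
    intro i c hc x
    have : R' ≤ ‖eL.symm (i.insertNth c x)‖ := by
      refine le_trans ?_ (coord_le_norm _ i)
      have h2 : (eL.symm (i.insertNth c x)) i = (i.insertNth c x : Fin (k+1) → ℝ) i := rfl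
      rw [h2, Fin.insertNth_apply_same, hc]
    have := hG0 _ this
    simp only [f, this]
    rfl
  rw [hEQ, hEQ2]
  simp only [hdivf] at hDT
  rw [hDT]
  apply Finset.sum_eq_zero
  intro i _
  have h1 : ∀ x : Fin k → ℝ, f (i.insertNth (b i) x) i = 0 := by
    intro x
    refine hface i (b i) ?_ x
    simp only [b]
    rw [abs_of_nonneg]; positivity
  have h2 : ∀ x : Fin k → ℝ, f (i.insertNth (a i) x) i = 0 := by
    intro x; refine hface i (a i) ?_ x
    simp only [a, abs_neg]
    rw [abs_of_nonneg]; positivity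
  simp only [h1, h2, integral_zero, sub_zero]

lemma euclid_decomp {n : ℕ} (v : EuclideanSpace ℝ (Fin n)) :
    v = ∑ i, v i • EuclideanSpace.single i (1:ℝ) := by
  have h := (EuclideanSpace.basisFun (Fin n) ℝ).sum_repr v
  conv_lhs => rw [← h]
  refine Finset.sum_congr rfl fun i _ => ?_
  simp [EuclideanSpace.basisFun_apply, EuclideanSpace.basisFun_repr]

lemma clm_apply_sum {n : ℕ} (L : EuclideanSpace ℝ (Fin n) →L[ℝ] ℝ) (v : EuclideanSpace ℝ (Fin n)) :
    L v = ∑ i, L (EuclideanSpace.single i 1) * v i := by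
  conv_lhs => rw [euclid_decomp v]
  rw [map_sum]
  congr 1; funext i
  rw [L.map_smul, smul_eq_mul, mul_comm]

lemma vdiv_smul {n : ℕ} {g : EuclideanSpace ℝ (Fin n) → ℝ}
    {F : EuclideanSpace ℝ (Fin n) → EuclideanSpace ℝ (Fin n)}
    {x : EuclideanSpace ℝ (Fin n)}
    (hg : DifferentiableAt ℝ g x) (hF : DifferentiableAt ℝ F x) :
    vdiv (fun y => g y • F y) x = fderiv ℝ g x (F x) + g x * vdiv F x := by
  unfold vdiv
  rw [fderiv_fun_smul hg hF]
  have : ∀ i : Fin n,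
      ((g x • fderiv ℝ F x + (fderiv ℝ g x).smulRight (F x)) (EuclideanSpace.single i 1)) i
      = g x * (fderiv ℝ F x (EuclideanSpace.single i 1) i)
        + fderiv ℝ g x (EuclideanSpace.single i 1) * (F x) i := by
    intro i
    simp only [ContinuousLinearMap.add_apply, ContinuousLinearMap.coe_smul',
      Pi.smul_apply, ContinuousLinearMap.smulRight_apply, PiLp.add_apply,
      PiLp.smul_apply, smul_eq_mul]
    try ring
  rw [Finset.sum_congr rfl (fun i _ => this i), Finset.sum_add_distrib, ← Finset.mul_sum]
  rw [clm_apply_sum (fderiv ℝ g x) (F x)]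
  ring

lemma fderiv_apply_eq_inner_gradient {n : ℕ} {f : EuclideanSpace ℝ (Fin n) → ℝ}
    {x : EuclideanSpace ℝ (Fin n)} (hf : DifferentiableAt ℝ f x)
    (v : EuclideanSpace ℝ (Fin n)) :
    fderiv ℝ f x v = ⟪gradient f x, v⟫ := by
  have h := hf.hasGradientAt
  rw [hasGradientAt_iff_hasFDerivAt] at h
  rw [hf.hasFDerivAt.unique h]
  simp [InnerProductSpace.toDual_apply_apply]

lemma inner_Amul {n : ℕ} (Φ : ℝ → ℝ) (η v w : EuclideanSpace ℝ (Fin n)) :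
    ⟪Amul Φ η v, w⟫ = 2 * deriv (deriv Φ) (‖η‖ ^ 2) * ⟪η, v⟫ * ⟪η, w⟫
      + deriv Φ (‖η‖ ^ 2) * ⟪v, w⟫ := by
  unfold Amul
  rw [inner_add_left, real_inner_smul_left, real_inner_smul_left]
  try ring

lemma derivPhi_zero_nonneg {Φ : ℝ → ℝ} (hΦ : ContDiff ℝ 2 Φ)
    (hΦ'pos : ∀ s : ℝ, 0 < s → 0 < deriv Φ s) : 0 ≤ deriv Φ 0 := by
  have hc : Continuous (deriv Φ) := hΦ.continuous_deriv (by norm_num)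
  have ht : Tendsto (deriv Φ) (nhdsWithin 0 (Set.Ioi 0)) (nhds (deriv Φ 0)) :=
    (hc.continuousAt.tendsto).mono_left nhdsWithin_le_nhds
  exact ge_of_tendsto ht (eventually_nhdsWithin_of_forall fun s hs => (hΦ'pos s hs).le)

lemma inner_Amul_self_nonneg {n : ℕ} {Φ : ℝ → ℝ} (hΦ : ContDiff ℝ 2 Φ)
    (hΦ'pos : ∀ s : ℝ, 0 < s → 0 < deriv Φ s)
    (hΦell : ∀ s : ℝ, 0 < s → 0 < deriv Φ s + 2 * s * deriv (deriv Φ) s)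
    (η v : EuclideanSpace ℝ (Fin n)) : 0 ≤ ⟪Amul Φ η v, v⟫ := by
  rw [inner_Amul]
  rcases eq_or_ne η 0 with h | h
  · subst h
    simp only [inner_zero_left, norm_zero, mul_zero, zero_mul, zero_add]
    have := derivPhi_zero_nonneg hΦ hΦ'pos
    have hvv : (0:ℝ) ≤ ⟪v, v⟫ := real_inner_self_nonneg
    have h02 : (0:ℝ) ^ 2 = 0 := by norm_num
    rw [h02]
    exact mul_nonneg this hvv
  · have hs : 0 < ‖η‖ ^ 2 := pow_pos (norm_pos_iff.mpr h) 2
    set s := ‖η‖ ^ 2 with hsdef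
    have hvv : ⟪v, v⟫ = ‖v‖ ^ 2 := real_inner_self_eq_norm_sq v
    have hcs : ⟪η, v⟫ ^ 2 ≤ s * ‖v‖ ^ 2 := by
      have := abs_real_inner_le_norm η v
      have h2 : ⟪η, v⟫ ^ 2 ≤ (‖η‖ * ‖v‖) ^ 2 := by
        rw [← sq_abs]
        exact pow_le_pow_left₀ (abs_nonneg _) this 2
      calc ⟪η, v⟫ ^ 2 ≤ (‖η‖ * ‖v‖) ^ 2 := h2
        _ = s * ‖v‖ ^ 2 := by rw [hsdef]; ring
    have h1 := hΦ'pos s hs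
    have h2 := hΦell s hs
    rcases le_or_gt 0 (deriv (deriv Φ) s) with hc | hc
    · nlinarith [sq_nonneg (⟪η, v⟫), sq_nonneg ‖v‖]
    · nlinarith [sq_nonneg ‖v‖]

lemma amul_quadratic_ineq {n : ℕ} {Φ : ℝ → ℝ} (hΦ : ContDiff ℝ 2 Φ)
    (hΦ'pos : ∀ s : ℝ, 0 < s → 0 < deriv Φ s)
    (hΦell : ∀ s : ℝ, 0 < s → 0 < deriv Φ s + 2 * s * deriv (deriv Φ) s)
    (η P Z : EuclideanSpace ℝ (Fin n)) (t : ℝ) :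
    2 * t * ⟪Amul Φ η P, Z⟫ - t ^ 2 * ⟪Amul Φ η P, P⟫ ≤ ⟪Amul Φ η Z, Z⟫ := by
  have h := inner_Amul_self_nonneg hΦ hΦ'pos hΦell η (Z - t • P)
  rw [inner_Amul] at h
  rw [inner_Amul, inner_Amul, inner_Amul]
  have e1 : ⟪η, Z - t • P⟫ = ⟪η, Z⟫ - t * ⟪η, P⟫ := by
    rw [inner_sub_right, real_inner_smul_right]
  have e2 : ⟪Z - t • P, Z - t • P⟫ = ⟪Z, Z⟫ - 2 * t * ⟪P, Z⟫ + t ^ 2 * ⟪P, P⟫ := by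
    rw [inner_sub_right, inner_sub_left, inner_sub_left, real_inner_smul_right,
      real_inner_smul_left, real_inner_smul_left, real_inner_smul_right,
      real_inner_comm P Z]
    ring
  rw [e1, e2] at h
  have e3 : ⟪Z, P⟫ = ⟪P, Z⟫ := real_inner_comm P Z
  nlinarith [h]

lemma pair_amgm {a b p q z w : ℝ} (hp : p ≠ 0) (hq : q ≠ 0)
    (hab : 0 < a * p * q) (hba : 0 < b * p * q) :
    Real.sqrt (a * b) * z * w + Real.sqrt (b * a) * w * z
      ≤ a * p / q * (w * w) + b * q / p * (z * z) := by
  set α : ℝ := a * p / q with hα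
  set β : ℝ := b * q / p with hβ
  have hαpos : 0 < α := by
    have : α = (a * p * q) / (q * q) := by
      rw [hα, div_eq_div_iff hq (mul_ne_zero hq hq)]; ring
    rw [this]
    exact div_pos hab (by rcases hq.lt_or_gt with h | h <;> nlinarith)
  have hβpos : 0 < β := by
    have : β = (b * p * q) / (p * p) := by
      rw [hβ, div_eq_div_iff hp (mul_ne_zero hp hp)]; ring
    rw [this]
    exact div_pos hba (by rcases hp.lt_or_gt with h | h <;> nlinarith)
  have hαβ : α * β = a * b := by
    rw [hα, hβ, div_mul_div_comm, div_eq_iff (mul_ne_zero hq hp)]; ring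
  have hs1 : Real.sqrt (a * b) = Real.sqrt α * Real.sqrt β := by
    rw [← hαβ, Real.sqrt_mul hαpos.le]
  have hs2 : Real.sqrt (b * a) = Real.sqrt α * Real.sqrt β := by
    rw [mul_comm b a, hs1]
  rw [hs1, hs2]
  have h1 : Real.sqrt α ^ 2 = α := Real.sq_sqrt hαpos.le
  have h2 : Real.sqrt β ^ 2 = β := Real.sq_sqrt hβpos.le
  nlinarith [sq_nonneg (Real.sqrt α * w - Real.sqrt β * z), h1, h2]

lemma amgm_double {m : ℕ} (a : Fin m → Fin m → ℝ) (p z : Fin m → ℝ)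
    (hp : ∀ i, p i ≠ 0) (hsign : ∀ i j, 0 < a i j * p i * p j) :
    ∑ i, ∑ j, Real.sqrt (a i j * a j i) * z i * z j
      ≤ ∑ i, (z i * z i / p i) * ∑ j, a i j * p j := by
  have hR : ∀ i : Fin m, (z i * z i / p i) * ∑ j, a i j * p j
      = ∑ j, a i j * p j / p i * (z i * z i) := by
    intro i
    rw [Finset.mul_sum]
    refine Finset.sum_congr rfl fun j _ => ?_
    field_simp
  simp only [hR]
  set L : Fin m → Fin m → ℝ := fun i j => Real.sqrt (a i j * a j i) * z i * z j with hL
  set R : Fin m → Fin m → ℝ := fun i j => a i j * p j / p i * (z i * z i) with hRd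
  have key : ∀ i j, L i j + L j i ≤ R i j + R j i := by
    intro i j
    have h1 := hsign i j
    have h2 : 0 < a j i * p j * p i := by
      have := hsign j i; linarith [this]
    have := pair_amgm (hp j) (hp i) (by linarith [h1] : 0 < a i j * p j * p i) h2
      (z := z j) (w := z i)
    simp only [L, R]
    calc Real.sqrt (a i j * a j i) * z i * z j + Real.sqrt (a j i * a i j) * z j * z i
        = Real.sqrt (a i j * a j i) * z j * z i + Real.sqrt (a j i * a i j) * z i * z j := by ring
      _ ≤ a i j * p j / p i * (z i * z i) + a j i * p i / p j * (z j * z j) := this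
      _ = R i j + R j i := rfl
  have h2 : (∑ i, ∑ j, (R i j - L i j)) + (∑ i, ∑ j, (R i j - L i j))
      = ∑ i, ∑ j, ((R i j - L i j) + (R j i - L j i)) := by
    have hcomm : (∑ i, ∑ j, (R i j - L i j)) = ∑ i, ∑ j, (R j i - L j i) :=
      Finset.sum_comm
    nth_rewrite 2 [hcomm]
    rw [← Finset.sum_add_distrib]
    refine Finset.sum_congr rfl fun i _ => ?_
    rw [← Finset.sum_add_distrib]
  have h3 : 0 ≤ (∑ i, ∑ j, (R i j - L i j)) + (∑ i, ∑ j, (R i j - L i j)) := by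
    rw [h2]
    refine Finset.sum_nonneg fun i _ => Finset.sum_nonneg fun j _ => ?_
    have := key i j; linarith
  have h4 : 0 ≤ ∑ i, ∑ j, (R i j - L i j) := by linarith
  have h5 : ∑ i, ∑ j, (R i j - L i j) = (∑ i, ∑ j, R i j) - ∑ i, ∑ j, L i j := by
    rw [← Finset.sum_sub_distrib]
    refine Finset.sum_congr rfl fun i _ => ?_
    rw [← Finset.sum_sub_distrib]
  rw [h5] at h4
  linarith

lemma fderiv_sq_div {n : ℕ} {ζ φ : EuclideanSpace ℝ (Fin n) → ℝ}
    {x : EuclideanSpace ℝ (Fin n)}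
    (hζ : DifferentiableAt ℝ ζ x) (hφ : DifferentiableAt ℝ φ x) (h0 : φ x ≠ 0)
    (w : EuclideanSpace ℝ (Fin n)) :
    fderiv ℝ (fun y => ζ y * ζ y / φ y) x w
      = 2 * (ζ x / φ x) * fderiv ℝ ζ x w - (ζ x / φ x) ^ 2 * fderiv ℝ φ x w := by
  have hinv : HasFDerivAt (fun y => (φ y)⁻¹) ((-(φ x ^ 2)⁻¹) • fderiv ℝ φ x) x :=
    (hasDerivAt_inv h0).comp_hasFDerivAt x hφ.hasFDerivAt
  have hmul : HasFDerivAt (fun y => ζ y * ζ y)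
      (ζ x • fderiv ℝ ζ x + ζ x • fderiv ℝ ζ x) x :=
    hζ.hasFDerivAt.mul hζ.hasFDerivAt
  have hprod := hmul.fun_mul hinv
  have heq : (fun y => ζ y * ζ y / φ y) = fun y => (ζ y * ζ y) * (φ y)⁻¹ := by
    funext y; rw [div_eq_mul_inv]
  rw [heq, hprod.fderiv]
  simp only [ContinuousLinearMap.add_apply, ContinuousLinearMap.coe_smul', Pi.smul_apply,
    smul_eq_mul]
  field_simp
  ring

lemma continuous_gradient {n : ℕ} {f : EuclideanSpace ℝ (Fin n) → ℝ}
    (hf : ContDiff ℝ 1 f) : Continuous (gradient f) := by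
  have h : gradient f = fun x =>
      (InnerProductSpace.toDual ℝ (EuclideanSpace ℝ (Fin n))).symm (fderiv ℝ f x) := rfl
  rw [h]
  exact (LinearIsometryEquiv.continuous _).comp (hf.continuous_fderiv one_ne_zero)

lemma gradient_eq_zero_of_nmem_tsupport {n : ℕ} {f : EuclideanSpace ℝ (Fin n) → ℝ}
    {x : EuclideanSpace ℝ (Fin n)} (hx : x ∉ tsupport f) : gradient f x = 0 := by
  have h : fderiv ℝ f x = 0 := by
    by_contra h
    exact hx (tsupport_fderiv_subset ℝ (subset_tsupport _ h))
  have : gradient f x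
      = (InnerProductSpace.toDual ℝ (EuclideanSpace ℝ (Fin n))).symm (fderiv ℝ f x) := rfl
  rw [this, h, map_zero]

lemma continuous_Amul_comp {n : ℕ} {Φ : ℝ → ℝ}
    (hc1 : Continuous (deriv Φ)) (hc2 : Continuous (deriv (deriv Φ)))
    {G1 G2 : EuclideanSpace ℝ (Fin n) → EuclideanSpace ℝ (Fin n)}
    (h1 : Continuous G1) (h2 : Continuous G2) :
    Continuous (fun x => Amul Φ (G1 x) (G2 x)) := by
  unfold Amul
  apply Continuous.add
  · exact (((continuous_const.mul (hc2.comp ((h1.norm).pow 2))).mul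
      (h1.inner h2))).smul h1
  · exact (hc1.comp ((h1.norm).pow 2)).smul h2

/-- **Stability inequality**: if `u` is a stable solution of the quasilinear system
`-div(Φ'(|∇uᵢ|²)∇uᵢ) = Hᵢ(u)` with `∂ⱼHᵢ(u)∂ᵢHⱼ(u) > 0`, then for all compactly
supported `C¹` test functions `ζᵢ`:
`∑_{i,j} ∫ √(∂ⱼHᵢ(u)∂ᵢHⱼ(u)) ζᵢζⱼ ≤ ∑ᵢ ∫ ⟨A(∇uᵢ)∇ζᵢ, ∇ζᵢ⟩`. -/
theorem stability_inequality
    (n m : ℕ) (hn : 1 ≤ n) (hm : 1 ≤ m)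
    (Φ : ℝ → ℝ) (hΦ : ContDiff ℝ 2 Φ) (hΦ0 : Φ 0 = 0)
    (hΦpos : ∀ s : ℝ, 0 < s → 0 < Φ s)
    (hΦ'pos : ∀ s : ℝ, 0 < s → 0 < deriv Φ s)
    (hΦell : ∀ s : ℝ, 0 < s → 0 < deriv Φ s + 2 * s * deriv (deriv Φ) s)
    (H : Fin m → (Fin m → ℝ) → ℝ) (hH : ∀ i, ContDiff ℝ 1 (H i))
    (u : Fin m → EuclideanSpace ℝ (Fin n) → ℝ)
    (hu : ∀ i, ContDiff ℝ 2 (u i))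
    (hsol : ∀ i x, -vdiv (fun y => deriv Φ (‖gradient (u i) y‖ ^ 2) • gradient (u i) y) x
        = H i (fun j => u j x))
    (hcoupling : ∀ (i j : Fin m) (x : EuclideanSpace ℝ (Fin n)),
      0 < fderiv ℝ (H i) (fun k => u k x) (Pi.single j 1)
        * fderiv ℝ (H j) (fun k => u k x) (Pi.single i 1))
    -- stability: there is a sign-coherent solution of the linearized system
    (hstable : ∃ φ : Fin m → EuclideanSpace ℝ (Fin n) → ℝ,
      (∀ i, ContDiff ℝ 2 (φ i)) ∧ (∀ i x, φ i x ≠ 0) ∧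
      (∀ (i j : Fin m) (x : EuclideanSpace ℝ (Fin n)),
        0 < fderiv ℝ (H i) (fun k => u k x) (Pi.single j 1) * φ i x * φ j x) ∧
      (∀ i x, -vdiv (fun y => Amul Φ (gradient (u i) y) (gradient (φ i) y)) x
        = ∑ j, fderiv ℝ (H i) (fun k => u k x) (Pi.single j 1) * φ j x)) :
    ∀ ζ : Fin m → EuclideanSpace ℝ (Fin n) → ℝ,
      (∀ i, ContDiff ℝ 1 (ζ i)) → (∀ i, HasCompactSupport (ζ i)) →
      (∑ i, ∑ j, ∫ x : EuclideanSpace ℝ (Fin n),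
          Real.sqrt (fderiv ℝ (H i) (fun k => u k x) (Pi.single j 1)
              * fderiv ℝ (H j) (fun k => u k x) (Pi.single i 1))
            * ζ i x * ζ j x)
        ≤ ∑ i, ∫ x : EuclideanSpace ℝ (Fin n),
            ⟪Amul Φ (gradient (u i) x) (gradient (ζ i) x), gradient (ζ i) x⟫ := by
  
  intro ζ hζ hζs
  obtain ⟨k, rfl⟩ : ∃ k, n = k + 1 := ⟨n - 1, by omega⟩
  obtain ⟨φ, hφC, hφ0, hsign, hlin⟩ := hstable
  haveI : Nonempty (Fin m) := ⟨⟨0, hm⟩⟩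
  -- basic regularity facts
  have hc1 : Continuous (deriv Φ) := hΦ.continuous_deriv one_le_two
  have hΦ1 : ContDiff ℝ (1+1) Φ := by norm_num; exact hΦ
  have hΦ' : ContDiff ℝ 1 (deriv Φ) := (contDiff_succ_iff_deriv.mp hΦ1).2.2
  have hc2 : Continuous (deriv (deriv Φ)) := hΦ'.continuous_deriv le_rfl
  set a : Fin m → Fin m → EuclideanSpace ℝ (Fin (k+1)) → ℝ :=
    fun i j x => fderiv ℝ (H i) (fun l => u l x) (Pi.single j 1) with ha
  have hac : ∀ i j, Continuous (a i j) := by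
    intro i j
    have hvc : Continuous (fun x : EuclideanSpace ℝ (Fin (k+1)) => (fun l => u l x)) :=
      continuous_pi fun l => (hu l).continuous
    exact (((hH i).continuous_fderiv one_ne_zero).comp hvc).clm_apply continuous_const
  set F : Fin m → EuclideanSpace ℝ (Fin (k+1)) → EuclideanSpace ℝ (Fin (k+1)) :=
    fun i x => Amul Φ (gradient (u i) x) (gradient (φ i) x) with hF
  have hFc : ∀ i, Continuous (F i) := fun i =>
    continuous_Amul_comp hc1 hc2 (continuous_gradient ((hu i).of_le one_le_two))
      (continuous_gradient ((hφC i).of_le one_le_two))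
  have hvdivF : ∀ i x, vdiv (F i) x = -(∑ j, a i j x * φ j x) := by
    intro i x
    have := hlin i x
    simp only [ha, hF] at this ⊢
    linarith
  have hsum_pos : ∀ i x, 0 < (∑ j, a i j x * φ j x) * φ i x := by
    intro i x
    rw [Finset.sum_mul]
    apply Finset.sum_pos
    · intro j _
      have h := hsign i j x
      have he : a i j x * φ j x * φ i x = a i j x * φ i x * φ j x := by ring
      rw [he]
      exact h
    · exact Finset.univ_nonempty
  have hFd : ∀ i x, DifferentiableAt ℝ (F i) x := by
    intro i x
    by_contra h
    have h0 : fderiv ℝ (F i) x = 0 := fderiv_zero_of_not_differentiableAt h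
    have hz : vdiv (F i) x = 0 := by simp [vdiv, h0]
    have h1 := hvdivF i x
    have h2 := hsum_pos i x
    rw [hz] at h1
    have h3 : (∑ j, a i j x * φ j x) = 0 := by linarith
    rw [h3, zero_mul] at h2
    exact lt_irrefl 0 h2
  -- test functions
  set g : Fin m → EuclideanSpace ℝ (Fin (k+1)) → ℝ := fun i x => ζ i x * ζ i x / φ i x with hg
  have hgC : ∀ i, ContDiff ℝ 1 (g i) := fun i =>
    ((hζ i).mul (hζ i)).div ((hφC i).of_le one_le_two) (hφ0 i)
  have htsg : ∀ i, tsupport (g i) ⊆ tsupport (ζ i) := by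
    intro i
    apply closure_mono
    intro x hx
    simp only [Function.mem_support, hg] at hx ⊢
    intro h
    apply hx
    rw [h]
    ring
  have hfg0 : ∀ i x, x ∉ tsupport (ζ i) → fderiv ℝ (g i) x = 0 := by
    intro i x hx
    by_contra h
    exact hx (htsg i (tsupport_fderiv_subset ℝ (subset_tsupport _ h)))
  -- integrability facts
  have hint1 : ∀ i, Integrable (fun x => fderiv ℝ (g i) x (F i x)) := by
    intro i
    apply Continuous.integrable_of_hasCompactSupport
    · exact ((hgC i).continuous_fderiv one_ne_zero).clm_apply (hFc i)
    · apply HasCompactSupport.intro (hζs i)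
      intro x hx
      rw [hfg0 i x hx]
      simp
  have hsumc : ∀ i, Continuous (fun x => ∑ j, a i j x * φ j x) :=
    fun i => continuous_finset_sum _ fun j _ => (hac i j).mul ((hφC j).continuous)
  have hint2 : ∀ i, Integrable (fun x => g i x * ∑ j, a i j x * φ j x) := by
    intro i
    apply Continuous.integrable_of_hasCompactSupport
    · exact (hgC i).continuous.mul (hsumc i)
    · apply HasCompactSupport.intro (hζs i)
      intro x hx
      have hz : ζ i x = 0 := image_eq_zero_of_notMem_tsupport hx
      simp [hg, hz]
  -- integration by parts
  have hIBP : ∀ i, ∫ x, fderiv ℝ (g i) x (F i x)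
      = ∫ x, g i x * ∑ j, a i j x * φ j x := by
    intro i
    have hGc : Continuous (fun x => g i x • F i x) := (hgC i).continuous.smul (hFc i)
    have hGd : ∀ x, DifferentiableAt ℝ (fun y => g i y • F i y) x := fun x =>
      (((hgC i).differentiable one_ne_zero) x).smul (hFd i x)
    have hGs : HasCompactSupport (fun x => g i x • F i x) := by
      apply HasCompactSupport.intro (hζs i)
      intro x hx
      have hz : ζ i x = 0 := image_eq_zero_of_notMem_tsupport hx
      simp [hg, hz]
    have hveq : ∀ x, vdiv (fun y => g i y • F i y) x
        = fderiv ℝ (g i) x (F i x) - g i x * ∑ j, a i j x * φ j x := by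
      intro x
      rw [vdiv_smul (((hgC i).differentiable one_ne_zero) x) (hFd i x), hvdivF i x]
      ring
    have hdc : Continuous (vdiv (fun y => g i y • F i y)) := by
      rw [funext hveq]
      exact (((hgC i).continuous_fderiv one_ne_zero).clm_apply (hFc i)).sub
        ((hgC i).continuous.mul (hsumc i))
    have h0 := integral_vdiv_eq_zero _ hGc hGd hGs hdc
    simp only [hveq] at h0
    rw [integral_sub (hint1 i) (hint2 i)] at h0
    linarith
  -- integrability of the two sides
  have hLint : ∀ i j, Integrable
      (fun x => Real.sqrt (a i j x * a j i x) * ζ i x * ζ j x) := by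
    intro i j
    apply Continuous.integrable_of_hasCompactSupport
    · exact ((Real.continuous_sqrt.comp ((hac i j).mul (hac j i))).mul
        (hζ i).continuous).mul (hζ j).continuous
    · apply HasCompactSupport.intro (hζs i)
      intro x hx
      have hz : ζ i x = 0 := image_eq_zero_of_notMem_tsupport hx
      rw [hz]
      ring
  have hTint : ∀ i, Integrable (fun x =>
      ⟪Amul Φ (gradient (u i) x) (gradient (ζ i) x), gradient (ζ i) x⟫) := by
    intro i
    apply Continuous.integrable_of_hasCompactSupport
    · exact (continuous_Amul_comp hc1 hc2 (continuous_gradient ((hu i).of_le one_le_two))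
        (continuous_gradient (hζ i))).inner (continuous_gradient (hζ i))
    · apply HasCompactSupport.intro (hζs i)
      intro x hx
      rw [gradient_eq_zero_of_nmem_tsupport hx]
      simp
  -- pointwise comparisons
  have hpoint1 : ∀ x, ∑ i, ∑ j, Real.sqrt (a i j x * a j i x) * ζ i x * ζ j x
      ≤ ∑ i, g i x * ∑ j, a i j x * φ j x := by
    intro x
    exact amgm_double (fun i j => a i j x) (fun i => φ i x) (fun i => ζ i x)
      (fun i => hφ0 i x) (fun i j => hsign i j x)
  have hpoint4 : ∀ i x, fderiv ℝ (g i) x (F i x)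
      ≤ ⟪Amul Φ (gradient (u i) x) (gradient (ζ i) x), gradient (ζ i) x⟫ := by
    intro i x
    have hζd : DifferentiableAt ℝ (ζ i) x := (hζ i).differentiable one_ne_zero x
    have hφd : DifferentiableAt ℝ (φ i) x := (hφC i).differentiable two_ne_zero x
    have hder : fderiv ℝ (g i) x (F i x)
        = 2 * (ζ i x / φ i x) * fderiv ℝ (ζ i) x (F i x)
          - (ζ i x / φ i x) ^ 2 * fderiv ℝ (φ i) x (F i x) :=
      fderiv_sq_div hζd hφd (hφ0 i x) (F i x)
    have e1 : fderiv ℝ (ζ i) x (F i x)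
        = ⟪Amul Φ (gradient (u i) x) (gradient (φ i) x), gradient (ζ i) x⟫ := by
      rw [fderiv_apply_eq_inner_gradient hζd, real_inner_comm]
    have e2 : fderiv ℝ (φ i) x (F i x)
        = ⟪Amul Φ (gradient (u i) x) (gradient (φ i) x), gradient (φ i) x⟫ := by
      rw [fderiv_apply_eq_inner_gradient hφd, real_inner_comm]
    have hq := amul_quadratic_ineq hΦ hΦ'pos hΦell (gradient (u i) x)
      (gradient (φ i) x) (gradient (ζ i) x) (ζ i x / φ i x)
    rw [hder, e1, e2]
    linarith [hq]
  -- final chain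
  have key : ∑ i, ∑ j, ∫ x, Real.sqrt (a i j x * a j i x) * ζ i x * ζ j x
      ≤ ∑ i, ∫ x : EuclideanSpace ℝ (Fin (k+1)),
          ⟪Amul Φ (gradient (u i) x) (gradient (ζ i) x), gradient (ζ i) x⟫ := by
    calc ∑ i, ∑ j, ∫ x, Real.sqrt (a i j x * a j i x) * ζ i x * ζ j x
        = ∑ i, ∫ x, ∑ j, Real.sqrt (a i j x * a j i x) * ζ i x * ζ j x :=
          Finset.sum_congr rfl fun i _ =>
            (integral_finset_sum _ fun j _ => hLint i j).symm
      _ = ∫ x, ∑ i, ∑ j, Real.sqrt (a i j x * a j i x) * ζ i x * ζ j x :=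
          (integral_finset_sum _ fun i _ =>
            integrable_finset_sum _ fun j _ => hLint i j).symm
      _ ≤ ∫ x, ∑ i, g i x * ∑ j, a i j x * φ j x :=
          integral_mono
            (integrable_finset_sum _ fun i _ =>
              integrable_finset_sum _ fun j _ => hLint i j)
            (integrable_finset_sum _ fun i _ => hint2 i) hpoint1
      _ = ∑ i, ∫ x, g i x * ∑ j, a i j x * φ j x :=
          integral_finset_sum _ fun i _ => hint2 i
      _ = ∑ i, ∫ x, fderiv ℝ (g i) x (F i x) :=
          Finset.sum_congr rfl fun i _ => (hIBP i).symm
      _ ≤ ∑ i, ∫ x : EuclideanSpace ℝ (Fin (k+1)),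
            ⟪Amul Φ (gradient (u i) x) (gradient (ζ i) x), gradient (ζ i) x⟫ :=
          Finset.sum_le_sum fun i _ => integral_mono (hint1 i) (hTint i) (hpoint4 i)
  simpa only [ha] using key
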